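/- Let Λs ⊆ Λc be full-rank lattices with generator matrices Gs, Gc, Hc = Gc⁻¹, and let M₁,…,Mₙ be positive integers giving a rectangular encoding enc(b) = Gc b mod Λs (a bijection from ∏ᵢ ℤ/Mᵢℤ onto coset leaders C of Λc/Λs). If for every i, every entry of row i of Hc·Gs is divisible by Mᵢ, then enc is a group homomorphism from ℤ/M₁ℤ × ⋯ × ℤ/Mₙℤ (componentwise addition) to C with the group operation x ⊕ y = (x + y) mod Λs; i.e., enc(b₁ ⊞ b₂) = enc(b₁) ⊕ enc(b₂). -/
import Mathlib


/-- The lattice generated by the columns of `G`. -/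
def lat {n : ℕ} (G : Matrix (Fin n) (Fin n) ℝ) : Set (Fin n → ℝ) :=
  {x | ∃ b : Fin n → ℤ, x = G.mulVec (fun i => (b i : ℝ))}

/-- `F` is a fundamental region of the lattice `L`. -/
def IsFund {n : ℕ} (L F : Set (Fin n → ℝ)) : Prop :=
  ∀ y : Fin n → ℝ, ∃! l, l ∈ L ∧ y - l ∈ F

lemma lat_sub_mem {n : ℕ} {G : Matrix (Fin n) (Fin n) ℝ} {x y : Fin n → ℝ}
    (hx : x ∈ lat G) (hy : y ∈ lat G) : x - y ∈ lat G := by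
  obtain ⟨b, rfl⟩ := hx
  obtain ⟨c, rfl⟩ := hy
  refine ⟨b - c, ?_⟩
  rw [show (fun i => ((b - c) i : ℝ)) = (fun i => (b i : ℝ)) - (fun i => (c i : ℝ))
    from funext fun i => by push_cast; simp, Matrix.mulVec_sub]

lemma lat_add_mem {n : ℕ} {G : Matrix (Fin n) (Fin n) ℝ} {x y : Fin n → ℝ}
    (hx : x ∈ lat G) (hy : y ∈ lat G) : x + y ∈ lat G := by
  obtain ⟨b, rfl⟩ := hx
  obtain ⟨c, rfl⟩ := hy
  refine ⟨b + c, ?_⟩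
  rw [show (fun i => ((b + c) i : ℝ)) = (fun i => (b i : ℝ)) + (fun i => (c i : ℝ))
    from funext fun i => by push_cast; simp, Matrix.mulVec_add]

lemma lat_neg_mem {n : ℕ} {G : Matrix (Fin n) (Fin n) ℝ} {x : Fin n → ℝ}
    (hx : x ∈ lat G) : -x ∈ lat G := by
  obtain ⟨b, rfl⟩ := hx
  refine ⟨-b, ?_⟩
  rw [show (fun i => ((-b) i : ℝ)) = -(fun i => (b i : ℝ))
    from funext fun i => by push_cast; simp, Matrix.mulVec_neg]

/-- Key lemma: any `Gc·d` with `Mᵢ ∣ dᵢ` for all `i` lies in `Λs`. -/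
lemma key_lemma {n : ℕ}
    (Gc Gs : Matrix (Fin n) (Fin n) ℝ)
    (hGc : IsUnit Gc.det)
    (hsub : lat Gs ⊆ lat Gc)
    (M : Fin n → ℤ) (hMpos : ∀ i, 0 < M i)
    (F : Set (Fin n → ℝ)) (hF : IsFund (lat Gs) F)
    (enc : (Fin n → ℤ) → (Fin n → ℝ))
    (henc : ∀ b : Fin n → ℤ, enc b ∈ F ∧
      enc b - Gc.mulVec (fun i => (b i : ℝ)) ∈ lat Gs)
    (hbij : Set.BijOn enc {b : Fin n → ℤ | ∀ i, 0 ≤ b i ∧ b i < M i}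
      (lat Gc ∩ F))
    (hdiv : ∀ i j, ∃ z : ℤ, (Gc⁻¹ * Gs) i j = (M i : ℝ) * (z : ℝ))
    (d : Fin n → ℤ) (hd : ∀ i, ∃ k : ℤ, d i = M i * k) :
    Gc.mulVec (fun i => (d i : ℝ)) ∈ lat Gs := by
  set y := Gc.mulVec (fun i => (d i : ℝ)) with hy
  obtain ⟨l, ⟨hlΛ, hlF⟩, _⟩ := hF y
  have hcΛc : y - l ∈ lat Gc := lat_sub_mem ⟨d, rfl⟩ (hsub hlΛ)
  obtain ⟨b, hb, hbe⟩ := hbij.surjOn ⟨hcΛc, hlF⟩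
  -- Gc b - y ∈ Λs
  have h1 : Gc.mulVec (fun i => (b i : ℝ)) - y ∈ lat Gs := by
    have heq : Gc.mulVec (fun i => (b i : ℝ)) - y =
        (-(enc b - Gc.mulVec (fun i => (b i : ℝ)))) + (-l) := by
      rw [hbe]; ring
    rw [heq]
    exact lat_add_mem (lat_neg_mem (henc b).2) (lat_neg_mem hlΛ)
  obtain ⟨a, ha⟩ := h1
  -- invert Gc
  have hinv : ∀ v : Fin n → ℝ, Gc⁻¹.mulVec (Gc.mulVec v) = v := by
    intro v
    rw [Matrix.mulVec_mulVec, Matrix.nonsing_inv_mul Gc hGc, Matrix.one_mulVec]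
  have h2 : (fun i => (b i : ℝ)) - (fun i => (d i : ℝ)) =
      (Gc⁻¹ * Gs).mulVec (fun i => (a i : ℝ)) := by
    rw [← Matrix.mulVec_mulVec, ← ha, hy, ← Matrix.mulVec_sub, hinv]
  choose z hz using hdiv
  -- each b i is a multiple of M i, hence 0
  have h3 : ∀ i, b i = 0 := by
    intro i
    obtain ⟨k, hk⟩ := hd i
    have h4 := congrFun h2 i
    simp only [Pi.sub_apply, Matrix.mulVec, dotProduct] at h4
    have h5 : (b i : ℝ) - (d i : ℝ) = (M i : ℝ) * ∑ j, (z i j : ℝ) * (a j : ℝ) := by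
      rw [h4, Finset.mul_sum]
      exact Finset.sum_congr rfl fun j _ => by rw [hz i j]; ring
    set w : ℤ := k + ∑ j, z i j * a j with hw
    have h6 : (b i : ℝ) = ((M i * w : ℤ) : ℝ) := by
      push_cast [hw]
      rw [mul_add]
      rw [← h5, hk]
      push_cast
      ring
    have h7 : b i = M i * w := by exact_mod_cast h6
    have h8 := (hb i).1
    have h9 := (hb i).2
    rw [h7] at h8 h9
    have hw0 : w = 0 := by
      by_contra hne
      rcases lt_or_gt_of_ne hne with hlt | hgt
      · have : M i * w < 0 := mul_neg_of_pos_of_neg (hMpos i) hlt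
        omega
      · have : M i ≤ M i * w := le_mul_of_one_le_right (le_of_lt (hMpos i)) hgt
        omega
    rw [h7, hw0, mul_zero]
  -- conclude: y = Gs (-a)
  refine ⟨-a, ?_⟩
  have hb0 : (fun i => (b i : ℝ)) = (0 : Fin n → ℝ) := funext fun i => by
    rw [h3 i]; simp
  have : Gc.mulVec (fun i => (b i : ℝ)) = 0 := by rw [hb0, Matrix.mulVec_zero]
  rw [this, zero_sub] at ha
  have hcast : (fun i => ((-a) i : ℝ)) = -(fun i => (a i : ℝ)) := funext fun i => by
    push_cast; simp
  rw [hcast, Matrix.mulVec_neg, ← ha, neg_neg]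

/-- Homomorphism condition: if every entry of row `i` of `Hc·Gs` is divisible
by `Mᵢ`, then the rectangular encoding `enc(b) = Gc b mod Λs` satisfies
`enc(b₁ ⊞ b₂) = enc(b₁) ⊕ enc(b₂)`, i.e.
`enc((b₁+b₂) mod M) ≡ enc(b₁) + enc(b₂) (mod Λs)`. -/
theorem encoding_group_homomorphism {n : ℕ}
    (Gc Gs : Matrix (Fin n) (Fin n) ℝ)
    (hGc : IsUnit Gc.det) (hGs : IsUnit Gs.det)
    (hsub : lat Gs ⊆ lat Gc)
    (M : Fin n → ℤ) (hMpos : ∀ i, 0 < M i)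
    (F : Set (Fin n → ℝ)) (hF : IsFund (lat Gs) F)
    (enc : (Fin n → ℤ) → (Fin n → ℝ))
    (henc : ∀ b : Fin n → ℤ, enc b ∈ F ∧
      enc b - Gc.mulVec (fun i => (b i : ℝ)) ∈ lat Gs)
    (hbij : Set.BijOn enc {b : Fin n → ℤ | ∀ i, 0 ≤ b i ∧ b i < M i}
      (lat Gc ∩ F))
    (hdiv : ∀ i j, ∃ z : ℤ, (Gc⁻¹ * Gs) i j = (M i : ℝ) * (z : ℝ)) :
    ∀ b₁ ∈ {b : Fin n → ℤ | ∀ i, 0 ≤ b i ∧ b i < M i},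
    ∀ b₂ ∈ {b : Fin n → ℤ | ∀ i, 0 ≤ b i ∧ b i < M i},
      enc (fun i => (b₁ i + b₂ i) % M i) - (enc b₁ + enc b₂) ∈ lat Gs := by
  intro b₁ _ b₂ _
  set m : Fin n → ℤ := fun i => (b₁ i + b₂ i) % M i with hm
  have hd : ∀ i, ∃ k : ℤ, m i - b₁ i - b₂ i = M i * k := by
    intro i
    refine ⟨-((b₁ i + b₂ i) / M i), ?_⟩
    have h := Int.emod_add_mul_ediv (b₁ i + b₂ i) (M i)
    simp only [hm]
    linear_combination h
  have hkey := key_lemma Gc Gs hGc hsub M hMpos F hF enc henc hbij hdiv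
    (fun i => m i - b₁ i - b₂ i) hd
  have hG : Gc.mulVec (fun i => ((m i - b₁ i - b₂ i : ℤ) : ℝ)) =
      Gc.mulVec (fun i => (m i : ℝ)) - Gc.mulVec (fun i => (b₁ i : ℝ)) -
      Gc.mulVec (fun i => (b₂ i : ℝ)) := by
    rw [show (fun i => ((m i - b₁ i - b₂ i : ℤ) : ℝ)) =
        (fun i => (m i : ℝ)) - (fun i => (b₁ i : ℝ)) - (fun i => (b₂ i : ℝ)) from
      funext fun i => by push_cast; simp, Matrix.mulVec_sub, Matrix.mulVec_sub]
  rw [hG] at hkey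
  have e1 := (henc m).2
  have e2 := (henc b₁).2
  have e3 := (henc b₂).2
  have heq : enc m - (enc b₁ + enc b₂) =
      ((enc m - Gc.mulVec (fun i => (m i : ℝ))) -
        (enc b₁ - Gc.mulVec (fun i => (b₁ i : ℝ))) -
        (enc b₂ - Gc.mulVec (fun i => (b₂ i : ℝ)))) +
      (Gc.mulVec (fun i => (m i : ℝ)) - Gc.mulVec (fun i => (b₁ i : ℝ)) -
        Gc.mulVec (fun i => (b₂ i : ℝ))) := by ring
  rw [heq]
  exact lat_add_mem (lat_sub_mem (lat_sub_mem e1 e2) e3) hkey
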